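/- arXiv:2605.21549 — 8 statements merged into one kernel-verified Lean document; each statement's English description precedes it below -/
import Mathlib

section
/- Let (X, ρ) be a complete metric space and let ψ : X → X be a mapping that is k-continuous for some k ∈ ℕ (i.e. the k-th iterate ψ^k is continuous) and satisfies ρ(ψ²x, ψ²y) ≤ α(ρ(x, ψy) + ρ(y, ψx)) for all x, y ∈ X, for some constant α ∈ [0, 1/2). Then ψ has a unique fixed point x* in X, and for every initial point x ∈ X the iterative sequence (ψⁿx) converges to x*. -/
/-!
Along an orbit, the 2-Chatterjea condition applied to `ψⁿx` and `ψⁿ⁺¹x` gives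
`dₙ₊₂ ≤ α (dₙ + dₙ₊₁)` for the step lengths `dₙ = ρ(ψⁿx, ψⁿ⁺¹x)`, hence
`dₙ ≤ M (2α)^⌊n/2⌋`: every orbit is Cauchy and converges. Continuity of `ψᵏ` makes the limit
`k`-periodic, and the orbit of a periodic point converges only if the point is fixed.
Two fixed points `x, y` satisfy `ρ(x, y) ≤ 2α ρ(x, y)`, so they coincide.
-/

open Filter Topology Function

def IsTwoChatterjea {X : Type*} [PseudoMetricSpace X] (ψ : X → X) (α : ℝ) : Prop :=
  ∀ x y : X, dist (ψ (ψ x)) (ψ (ψ y)) ≤ α * (dist x (ψ y) + dist y (ψ x))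

theorem le_max_mul_pow_div_two {u : ℕ → ℝ} {α : ℝ} (hu0 : 0 ≤ u 0) (hα0 : 0 ≤ α)
    (hα : 2 * α ≤ 1) (hu : ∀ n, u (n + 2) ≤ α * (u n + u (n + 1))) (n : ℕ) :
    u n ≤ max (u 0) (u 1) * (2 * α) ^ (n / 2) := by
  set M := max (u 0) (u 1)
  have hM : 0 ≤ M := hu0.trans (le_max_left _ _)
  induction n using Nat.twoStepInduction with
  | zero => simp [M]
  | one => simp [M]
  | more n ih₀ ih₁ =>
    have hpow : (2 * α) ^ ((n + 1) / 2) ≤ (2 * α) ^ (n / 2) :=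
      pow_le_pow_of_le_one (by linarith) hα (by omega)
    have hn : (n + 2) / 2 = n / 2 + 1 := by omega
    calc u (n + 2) ≤ α * (u n + u (n + 1)) := hu n
      _ ≤ α * (M * (2 * α) ^ (n / 2) + M * (2 * α) ^ (n / 2)) := by
        gcongr
        exact ih₁.trans (mul_le_mul_of_nonneg_left hpow hM)
      _ = M * (2 * α) ^ ((n + 2) / 2) := by rw [hn, pow_succ]; ring

theorem summable_pow_div_two {β : ℝ} (hβ0 : 0 ≤ β) (hβ1 : β < 1) :
    Summable fun n : ℕ => β ^ (n / 2) := by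
  have hgeom := summable_geometric_of_lt_one hβ0 hβ1
  refine Summable.even_add_odd ?_ ?_
  · simpa using hgeom
  · simpa [Nat.mul_add_div two_pos] using hgeom

theorem Function.IsPeriodicPt.isFixedPt_of_tendsto {X : Type*} [TopologicalSpace X] [T2Space X]
    {f : X → X} {k : ℕ} {v w : X} (hv : IsPeriodicPt f k v) (hk : 0 < k)
    (hw : Tendsto (fun n => f^[n] v) atTop (𝓝 w)) : IsFixedPt f v := by
  have hkn : Tendsto (fun n => k * n) atTop atTop := tendsto_id.const_mul_atTop' hk
  have hvw : v = w := by
    have := hw.comp hkn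
    simpa [comp_def, (hv.mul_const _).eq] using this
  have hfvw : f v = w := by
    have := hw.comp ((tendsto_add_atTop_nat 1).comp hkn)
    simpa [comp_def, iterate_succ_apply', (hv.mul_const _).eq] using this
  exact hfvw.trans hvw.symm

theorem isPeriodicPt_of_tendsto_iterate {X : Type*} [TopologicalSpace X] [T2Space X]
    {f : X → X} {k : ℕ} {x v : X} (hx : Tendsto (fun n => f^[n] x) atTop (𝓝 v))
    (hk : ContinuousAt f^[k] v) : IsPeriodicPt f k v := by
  have hshift : Tendsto (fun n => f^[k] (f^[n] x)) atTop (𝓝 v) := by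
    have := hx.comp (tendsto_add_atTop_nat k)
    simpa [comp_def, ← iterate_add_apply, Nat.add_comm] using this
  exact tendsto_nhds_unique ((hk.tendsto).comp hx) hshift

namespace IsTwoChatterjea

section PseudoMetricSpace

variable {X : Type*} [PseudoMetricSpace X] {ψ : X → X} {α : ℝ}

theorem dist_iterate_succ_succ_le (h : IsTwoChatterjea ψ α) (hα0 : 0 ≤ α) (x : X) (n : ℕ) :
    dist (ψ^[n + 2] x) (ψ^[n + 3] x) ≤
      α * (dist (ψ^[n] x) (ψ^[n + 1] x) + dist (ψ^[n + 1] x) (ψ^[n + 2] x)) := by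
  have hxy := h (ψ^[n] x) (ψ^[n + 1] x)
  simp only [← iterate_succ_apply' ψ, dist_self, add_zero] at hxy
  exact hxy.trans (mul_le_mul_of_nonneg_left (dist_triangle _ _ _) hα0)

theorem dist_iterate_succ_le (h : IsTwoChatterjea ψ α) (hα0 : 0 ≤ α) (hα : α < 1 / 2)
    (x : X) (n : ℕ) :
    dist (ψ^[n] x) (ψ^[n + 1] x) ≤
      max (dist x (ψ x)) (dist (ψ x) (ψ (ψ x))) * (2 * α) ^ (n / 2) := by
  simpa using le_max_mul_pow_div_two (u := fun n => dist (ψ^[n] x) (ψ^[n + 1] x))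
    dist_nonneg hα0 (by linarith) (h.dist_iterate_succ_succ_le hα0 x) n

theorem cauchySeq_iterate (h : IsTwoChatterjea ψ α) (hα0 : 0 ≤ α) (hα : α < 1 / 2) (x : X) :
    CauchySeq fun n => ψ^[n] x :=
  cauchySeq_of_dist_le_of_summable _ (h.dist_iterate_succ_le hα0 hα x)
    ((summable_pow_div_two (by linarith) (by linarith)).mul_left _)

end PseudoMetricSpace

variable {X : Type*} [MetricSpace X] {ψ : X → X} {α : ℝ}

theorem isFixedPt_of_isPeriodicPt [CompleteSpace X] (h : IsTwoChatterjea ψ α) (hα0 : 0 ≤ α)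
    (hα : α < 1 / 2) {k : ℕ} (hk : 0 < k) {v : X} (hv : IsPeriodicPt ψ k v) : IsFixedPt ψ v :=
  have ⟨_, hw⟩ := cauchySeq_tendsto_of_complete (h.cauchySeq_iterate hα0 hα v)
  hv.isFixedPt_of_tendsto hk hw

theorem exists_isFixedPt_tendsto_iterate [CompleteSpace X] (h : IsTwoChatterjea ψ α)
    (hα0 : 0 ≤ α) (hα : α < 1 / 2) {k : ℕ} (hk : 0 < k) (hψk : Continuous ψ^[k]) (x : X) :
    ∃ v, IsFixedPt ψ v ∧ Tendsto (fun n => ψ^[n] x) atTop (𝓝 v) := by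
  obtain ⟨v, hv⟩ := cauchySeq_tendsto_of_complete (h.cauchySeq_iterate hα0 hα x)
  exact ⟨v, h.isFixedPt_of_isPeriodicPt hα0 hα hk
    (isPeriodicPt_of_tendsto_iterate hv hψk.continuousAt), hv⟩

theorem eq_of_isFixedPt (h : IsTwoChatterjea ψ α) (hα : α < 1 / 2) {x y : X} (hx : IsFixedPt ψ x)
    (hy : IsFixedPt ψ y) : x = y := by
  have hxy := h x y
  rw [hx.eq, hx.eq, hy.eq, hy.eq, dist_comm y x] at hxy
  exact dist_le_zero.mp (by nlinarith [dist_nonneg (x := x) (y := y)])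

end IsTwoChatterjea

/-- **Theorem 2.3.** If `(X, ρ)` is a complete metric space and `ψ : X → X` is a
`k`-continuous mapping (i.e. `ψ^[k]` is continuous) for some `k ∈ ℕ` satisfying
`ρ(ψ²x, ψ²y) ≤ α (ρ(x, ψy) + ρ(y, ψx))` for all `x, y ∈ X` with `α ∈ [0, 1/2)`,
then `ψ` has a unique fixed point and every iterative sequence `(ψⁿ x)` converges to it. -/
theorem stmt_0 {X : Type*} [MetricSpace X] [CompleteSpace X] [Nonempty X]
    (ψ : X → X) (k : ℕ) (hk : 1 ≤ k) (hψk : Continuous (ψ^[k]))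
    (α : ℝ) (hα0 : 0 ≤ α) (hα : α < 1 / 2)
    (hcontr : ∀ x y : X, dist (ψ (ψ x)) (ψ (ψ y)) ≤ α * (dist x (ψ y) + dist y (ψ x))) :
    ∃ xs : X, ψ xs = xs ∧ (∀ y : X, ψ y = y → y = xs) ∧
      ∀ x : X, Filter.Tendsto (fun n => ψ^[n] x) Filter.atTop (nhds xs) := by
  have h : IsTwoChatterjea ψ α := hcontr
  have hlim := h.exists_isFixedPt_tendsto_iterate hα0 hα hk hψk
  obtain ⟨xs, hxs, -⟩ := hlim (Classical.arbitrary X)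
  refine ⟨xs, hxs, fun y hy => h.eq_of_isFixedPt hα hy hxs, fun x => ?_⟩
  obtain ⟨v, hv, hxv⟩ := hlim x
  rwa [h.eq_of_isFixedPt hα hv hxs] at hxv
end

section
/- Let (X, ρ) be a complete metric space and let ψ : X → X satisfy ρ(ψ²x, ψ²y) ≤ α(ρ(x, ψy) + ρ(y, ψx)) for all x, y ∈ X, for some α ∈ [0, 1/2). Then the set of fixed points of ψ coincides with the set of fixed points of ψ²; in particular, any point z with ψ²z = z satisfies ψz = z. -/
theorem Function.IsFixedPt.of_comp_self_of_chatterjea {X : Type*} [MetricSpace X]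
    {ψ : X → X} {α : ℝ}
    (hcontr : ∀ x y : X, dist (ψ (ψ x)) (ψ (ψ y)) ≤ α * (dist x (ψ y) + dist y (ψ x)))
    {z : X} (hz : Function.IsFixedPt (ψ ∘ ψ) z) : Function.IsFixedPt ψ z := by
  have hz' : ψ (ψ z) = z := hz
  have hdist : dist z (ψ z) ≤ 0 := by
    simpa only [hz', dist_self, add_zero, mul_zero] using hcontr z (ψ z)
  exact (dist_le_zero.mp hdist).symm

theorem Function.fixedPoints_comp_self_eq_of_chatterjea {X : Type*} [MetricSpace X]
    {ψ : X → X} {α : ℝ}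
    (hcontr : ∀ x y : X, dist (ψ (ψ x)) (ψ (ψ y)) ≤ α * (dist x (ψ y) + dist y (ψ x))) :
    Function.fixedPoints ψ = Function.fixedPoints (ψ ∘ ψ) :=
  Set.ext fun _ => ⟨fun h => h.comp h, .of_comp_self_of_chatterjea hcontr⟩

theorem stmt_1_general {X : Type*} [MetricSpace X]
    (ψ : X → X) (α : ℝ)
    (hcontr : ∀ x y : X, dist (ψ (ψ x)) (ψ (ψ y)) ≤ α * (dist x (ψ y) + dist y (ψ x))) :
    Function.fixedPoints ψ = Function.fixedPoints (ψ ∘ ψ) ∧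
      ∀ z : X, ψ (ψ z) = z → ψ z = z :=
  ⟨Function.fixedPoints_comp_self_eq_of_chatterjea hcontr,
    fun _ hz => Function.IsFixedPt.of_comp_self_of_chatterjea hcontr hz⟩

/-- **Remark 2.4.** For a mapping `ψ` on a complete metric space satisfying the
2-Chatterjea condition, the fixed points of `ψ` coincide with the fixed points of `ψ²`;
in particular, `ψ² z = z` implies `ψ z = z`. -/
theorem stmt_1 {X : Type*} [MetricSpace X] [CompleteSpace X]
    (ψ : X → X) (α : ℝ) (hα0 : 0 ≤ α) (hα : α < 1 / 2)
    (hcontr : ∀ x y : X, dist (ψ (ψ x)) (ψ (ψ y)) ≤ α * (dist x (ψ y) + dist y (ψ x))) :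
    Function.fixedPoints ψ = Function.fixedPoints (ψ ∘ ψ) ∧
      ∀ z : X, ψ (ψ z) = z → ψ z = z :=
  stmt_1_general ψ α hcontr
end

section
/- Let (X, ρ) be a complete metric space and let ψ : X → X satisfy ρ(ψ²x, ψ²y) ≤ α(ρ(x, ψy) + ρ(y, ψx)) for all x, y ∈ X, for some α ∈ [0, 1/2) (no continuity assumption). Then there exists a point x* ∈ X such that for every initial point x ∈ X the iterative sequence (ψⁿx) converges to x*, and every fixed point of ψ equals x* (i.e. Fix(ψ) ⊆ {x*}). -/
/-!
Along an orbit `xₙ = ψⁿ x` the condition at `(xₙ, xₙ₊₁)` and the triangle inequality give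
`dₙ₊₂ ≤ α (dₙ + dₙ₊₁)` for `dₙ = ρ(xₙ, xₙ₊₁)`. Since `γ = α + 1/2 < 1` satisfies
`α (1 + γ) ≤ γ²`, the steps decay like `γⁿ`, so every orbit is Cauchy. If two orbits converge
to `p` and `q`, the condition at `(xₙ, yₙ)` passes to the limit as `ρ(p, q) ≤ 2α ρ(p, q)`,
forcing `p = q`; a fixed point is the limit of its own constant orbit.
-/

open Filter Topology Function

theorem le_mul_pow_of_le_mul_add {d : ℕ → ℝ} {α γ C : ℝ} (hα : 0 ≤ α) (hγ : 0 ≤ γ)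
    (hC : 0 ≤ C) (hαγ : α * (1 + γ) ≤ γ ^ 2) (h₀ : d 0 ≤ C) (h₁ : d 1 ≤ C * γ)
    (hd : ∀ n, d (n + 2) ≤ α * (d n + d (n + 1))) (n : ℕ) : d n ≤ C * γ ^ n := by
  suffices h : ∀ n, d n ≤ C * γ ^ n ∧ d (n + 1) ≤ C * γ ^ (n + 1) from (h n).1
  intro n
  induction n with
  | zero => simpa using ⟨h₀, h₁⟩
  | succ n ih =>
    refine ⟨ih.2, ?_⟩
    have hCγn : 0 ≤ C * γ ^ n := mul_nonneg hC (pow_nonneg hγ n)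
    calc d (n + 2) ≤ α * (d n + d (n + 1)) := hd n
      _ ≤ α * (C * γ ^ n + C * γ ^ (n + 1)) := by gcongr; exacts [ih.1, ih.2]
      _ = α * (1 + γ) * (C * γ ^ n) := by ring
      _ ≤ γ ^ 2 * (C * γ ^ n) := by gcongr
      _ = C * γ ^ (n + 2) := by ring

section TwoChatterjea

variable {X : Type*} [MetricSpace X]

def IsTwoChatterjeaWith (α : ℝ) (ψ : X → X) : Prop :=
  ∀ x y : X, dist (ψ (ψ x)) (ψ (ψ y)) ≤ α * (dist x (ψ y) + dist y (ψ x))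

namespace IsTwoChatterjeaWith

variable {ψ : X → X} {α : ℝ}

theorem dist_iterate_le (h : IsTwoChatterjeaWith α ψ) (x y : X) (n : ℕ) :
    dist (ψ^[n + 2] x) (ψ^[n + 2] y) ≤
      α * (dist (ψ^[n] x) (ψ^[n + 1] y) + dist (ψ^[n] y) (ψ^[n + 1] x)) := by
  simpa only [← iterate_succ_apply' ψ] using h (ψ^[n] x) (ψ^[n] y)

theorem dist_iterate_succ_le (h : IsTwoChatterjeaWith α ψ) (hα : 0 ≤ α) (x : X) (n : ℕ) :
    dist (ψ^[n + 2] x) (ψ^[n + 3] x) ≤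
      α * (dist (ψ^[n] x) (ψ^[n + 1] x) + dist (ψ^[n + 1] x) (ψ^[n + 2] x)) :=
  calc dist (ψ^[n + 2] x) (ψ^[n + 3] x)
      ≤ α * (dist (ψ^[n] x) (ψ^[n + 2] x) + dist (ψ^[n + 1] x) (ψ^[n + 1] x)) := by
        simpa only [← iterate_succ_apply' ψ] using h (ψ^[n] x) (ψ^[n + 1] x)
    _ ≤ α * (dist (ψ^[n] x) (ψ^[n + 1] x) + dist (ψ^[n + 1] x) (ψ^[n + 2] x)) := by
        rw [dist_self, add_zero]
        exact mul_le_mul_of_nonneg_left (dist_triangle _ _ _) hα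

theorem cauchySeq_iterate (h : IsTwoChatterjeaWith α ψ) (hα₀ : 0 ≤ α) (hα : α < 1 / 2)
    (x : X) : CauchySeq fun n => ψ^[n] x := by
  set γ := α + 1 / 2 with hγ_def
  have hγ : 0 < γ := by positivity
  have hαγ : α * (1 + γ) ≤ γ ^ 2 := by nlinarith
  set C := max (dist x (ψ x)) (dist (ψ x) (ψ (ψ x)) / γ)
  have h₀ : dist x (ψ x) ≤ C := le_max_left _ _
  have h₁ : dist (ψ x) (ψ (ψ x)) ≤ C * γ := (div_le_iff₀ hγ).1 (le_max_right _ _)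
  refine cauchySeq_of_le_geometric γ C (by linarith) fun n => ?_
  exact le_mul_pow_of_le_mul_add (d := fun n => dist (ψ^[n] x) (ψ^[n + 1] x)) hα₀ hγ.le
    (dist_nonneg.trans h₀) hαγ (by simpa using h₀) (by simpa using h₁)
    (h.dist_iterate_succ_le hα₀ x) n

theorem eq_of_tendsto_iterate (h : IsTwoChatterjeaWith α ψ) (hα : α < 1 / 2) {x y p q : X}
    (hp : Tendsto (fun n => ψ^[n] x) atTop (𝓝 p))
    (hq : Tendsto (fun n => ψ^[n] y) atTop (𝓝 q)) : p = q := by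
  have shift (k : ℕ) {z r : X} (hz : Tendsto (fun n => ψ^[n] z) atTop (𝓝 r)) :
      Tendsto (fun n => ψ^[n + k] z) atTop (𝓝 r) :=
    hz.comp (tendsto_add_atTop_nat k)
  have hpq : dist p q ≤ α * (dist p q + dist q p) :=
    le_of_tendsto_of_tendsto' ((shift 2 hp).dist (shift 2 hq))
      (((hp.dist (shift 1 hq)).add (hq.dist (shift 1 hp))).const_mul α)
      (h.dist_iterate_le x y)
  rw [dist_comm q p] at hpq
  exact dist_le_zero.1 (by nlinarith [dist_nonneg (x := p) (y := q)])

end IsTwoChatterjeaWith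

end TwoChatterjea

/-- **Corollary 2.8.** If `ψ` satisfies the 2-Chatterjea condition on a complete metric
space (no continuity assumption), then all iterative sequences `(ψⁿ x)` converge to one
and the same point `x*`, and `Fix(ψ) ⊆ {x*}`. -/
theorem stmt_2 {X : Type*} [MetricSpace X] [CompleteSpace X] [Nonempty X]
    (ψ : X → X) (α : ℝ) (hα0 : 0 ≤ α) (hα : α < 1 / 2)
    (hcontr : ∀ x y : X, dist (ψ (ψ x)) (ψ (ψ y)) ≤ α * (dist x (ψ y) + dist y (ψ x))) :
    ∃ xs : X, (∀ x : X, Filter.Tendsto (fun n => ψ^[n] x) Filter.atTop (nhds xs)) ∧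
      ∀ y : X, ψ y = y → y = xs := by
  have h : IsTwoChatterjeaWith α ψ := hcontr
  have hlim (x : X) : ∃ p, Tendsto (fun n => ψ^[n] x) atTop (𝓝 p) :=
    cauchySeq_tendsto_of_complete (h.cauchySeq_iterate hα0 hα x)
  obtain ⟨x₀⟩ := ‹Nonempty X›
  obtain ⟨xs, hxs⟩ := hlim x₀
  refine ⟨xs, fun x => ?_, fun y hy => ?_⟩
  · obtain ⟨p, hp⟩ := hlim x
    rwa [h.eq_of_tendsto_iterate hα hp hxs] at hp
  · have hconst : Tendsto (fun n => ψ^[n] y) atTop (𝓝 y) := by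
      simp only [iterate_fixed hy, tendsto_const_nhds]
    exact h.eq_of_tendsto_iterate hα hconst hxs
end

section
/- Let (X, ρ) be a metric space, let ψ : X → X satisfy ρ(ψ²x, ψ²y) ≤ α(ρ(x, ψy) + ρ(y, ψx)) for all x, y ∈ X for some α ∈ (0, 1/2), fix x₀ ∈ X, set xₙ = ψⁿx₀ and ρₙ = ρ(xₙ, xₙ₊₁). Then for all n ≥ 2, ρₙ ≤ α(ρₙ₋₂ + ρₙ₋₁); consequently the series Σₙ ρₙ converges and the sequence (xₙ) is Cauchy in (X, ρ). -/
/-!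
Applying the contraction to the pair `(x, ψ x)` gives `ρ(ψ²x, ψ³x) ≤ α ρ(x, ψ²x)`, and the triangle
inequality turns this into `ρₙ₊₂ ≤ α (ρₙ + ρₙ₊₁)`. Summing this over `n < N` bounds the tail
`Σ_{2 ≤ n < N+2} ρₙ` by `2α Σ_{n < N+2} ρₙ`, so the partial sums stay below `(ρ₀ + ρ₁) / (1 - 2α)`;
a summable sequence of consecutive distances makes the orbit Cauchy.
-/

open Finset

theorem summable_of_le_mul_add {d : ℕ → ℝ} {α : ℝ} (hd : ∀ n, 0 ≤ d n) (hα0 : 0 ≤ α)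
    (hα : α < 1 / 2) (hrec : ∀ n, d (n + 2) ≤ α * (d n + d (n + 1))) : Summable d := by
  set S : ℕ → ℝ := fun N => ∑ i ∈ range N, d i
  have hS_mono : Monotone S := fun _ _ h =>
    sum_le_sum_of_subset_of_nonneg (range_subset_range.2 h) fun i _ _ => hd i
  have hS_bound : ∀ N, S (N + 2) ≤ (d 0 + d 1) / (1 - 2 * α) := by
    intro N
    have htail : ∑ i ∈ range N, d (i + 2) ≤ α * (S N + ∑ i ∈ range N, d (i + 1)) := by
      rw [← sum_add_distrib, mul_sum]
      exact sum_le_sum fun i _ => hrec i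
    have hS_split : S (N + 2) = d 0 + d 1 + ∑ i ∈ range N, d (i + 2) := by
      simp only [S, sum_range_succ']
      ring
    have hshift : ∑ i ∈ range N, d (i + 1) ≤ S (N + 2) := by
      have hS_succ : S (N + 1) = ∑ i ∈ range N, d (i + 1) + d 0 := sum_range_succ' d N
      linarith [hS_mono (Nat.le_succ (N + 1)), hd 0]
    have hN : S N ≤ S (N + 2) := hS_mono (by omega)
    have hself : S (N + 2) ≤ d 0 + d 1 + 2 * α * S (N + 2) := by
      have := mul_le_mul_of_nonneg_left (add_le_add hN hshift) hα0
      linarith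
    rw [le_div_iff₀ (by linarith)]
    linarith
  exact summable_of_sum_range_le hd fun N => (hS_mono (Nat.le_add_right N 2)).trans (hS_bound N)

section Chatterjea

variable {X : Type*} [MetricSpace X] {ψ : X → X} {α : ℝ}

theorem dist_iterate_two_le_of_chatterjea (hα0 : 0 ≤ α)
    (hcontr : ∀ x y : X, dist (ψ (ψ x)) (ψ (ψ y)) ≤ α * (dist x (ψ y) + dist y (ψ x)))
    (x : X) :
    dist (ψ (ψ x)) (ψ (ψ (ψ x))) ≤ α * (dist x (ψ x) + dist (ψ x) (ψ (ψ x))) :=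
  calc dist (ψ (ψ x)) (ψ (ψ (ψ x))) ≤ α * (dist x (ψ (ψ x)) + dist (ψ x) (ψ x)) := hcontr x (ψ x)
    _ = α * dist x (ψ (ψ x)) := by rw [dist_self, add_zero]
    _ ≤ α * (dist x (ψ x) + dist (ψ x) (ψ (ψ x))) :=
        mul_le_mul_of_nonneg_left (dist_triangle _ _ _) hα0

theorem dist_iterate_add_two_le_of_chatterjea (hα0 : 0 ≤ α)
    (hcontr : ∀ x y : X, dist (ψ (ψ x)) (ψ (ψ y)) ≤ α * (dist x (ψ y) + dist y (ψ x)))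
    (x₀ : X) (n : ℕ) :
    dist (ψ^[n + 2] x₀) (ψ^[n + 3] x₀) ≤
      α * (dist (ψ^[n] x₀) (ψ^[n + 1] x₀) + dist (ψ^[n + 1] x₀) (ψ^[n + 2] x₀)) := by
  simpa only [Function.iterate_succ_apply'] using
    dist_iterate_two_le_of_chatterjea hα0 hcontr (ψ^[n] x₀)

end Chatterjea

/-- Inequality (2.2) and its consequences: for a 2-Chatterjea contraction (with
`α ∈ (0, 1/2)`) and `ρₙ = ρ(ψⁿ x₀, ψⁿ⁺¹ x₀)`, one has `ρₙ ≤ α (ρₙ₋₂ + ρₙ₋₁)` for `n ≥ 2`;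
consequently `Σ ρₙ` converges and `(ψⁿ x₀)` is a Cauchy sequence. -/
theorem stmt_4 {X : Type*} [MetricSpace X]
    (ψ : X → X) (α : ℝ) (hα0 : 0 < α) (hα : α < 1 / 2)
    (hcontr : ∀ x y : X, dist (ψ (ψ x)) (ψ (ψ y)) ≤ α * (dist x (ψ y) + dist y (ψ x)))
    (x₀ : X) :
    (∀ n : ℕ, 2 ≤ n →
        dist (ψ^[n] x₀) (ψ^[n + 1] x₀) ≤
          α * (dist (ψ^[n - 2] x₀) (ψ^[n - 1] x₀) + dist (ψ^[n - 1] x₀) (ψ^[n] x₀))) ∧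
      Summable (fun n : ℕ => dist (ψ^[n] x₀) (ψ^[n + 1] x₀)) ∧
      CauchySeq (fun n : ℕ => ψ^[n] x₀) := by
  have hrec := dist_iterate_add_two_le_of_chatterjea hα0.le hcontr x₀
  have hsum : Summable fun n : ℕ => dist (ψ^[n] x₀) (ψ^[n + 1] x₀) :=
    summable_of_le_mul_add (fun _ => dist_nonneg) hα0.le hα hrec
  refine ⟨fun n hn => ?_, hsum, cauchySeq_of_summable_dist hsum⟩
  obtain ⟨k, rfl⟩ := Nat.exists_eq_add_of_le' hn
  simpa only [Nat.add_sub_cancel, Nat.add_succ_sub_one] using hrec k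
end

section
/- Let (X, ρ) be a metric space, let m ∈ ℕ with m ≥ 3, let ψ : X → X satisfy ρ(ψ^m x, ψ^m y) ≤ α(ρ(x, ψy) + ρ(y, ψx)) for all x, y ∈ X for some α ∈ [0, 1/2), and for x ∈ X set a(x) = Σ_{i=0}^{m−1} ρ(ψ^i x, ψ^{i+1} x). Then for every n ∈ ℕ with n ≥ 1 and every l ∈ {0, 1, …, m−1}, one has ρ(ψ^{nm+l} x, ψ^{nm+l+1} x) ≤ 2^{n−1} α^n a(x). -/
/-!
Along an orbit, the contraction applied to the pair `(ψ^k x, ψ^{k+1} x)` gives the recursion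
`d (k + m) ≤ α (d k + d (k + 1))` for the consecutive distances `d k = ρ(ψ^k x, ψ^{k+1} x)`.
For the first block `d l + d (l + 1) ≤ a(x)`: when `l + 1 = m`, use `d m ≤ α (d 0 + d 1)`,
and `m ≥ 3` keeps the indices `0, 1, m - 1` distinct. Afterwards, if a block of `m`
consecutive distances is bounded by `c`, the next one is bounded by `2αc ≤ c`: its first entry
uses two entries of the old block, and each later entry uses one entry of the old block and one
that is already bounded by `2αc`.
-/

open Finset

namespace ChatterjeaSeq

variable {d : ℕ → ℝ} {m : ℕ} {α : ℝ}

theorem first_block_le (hd : ∀ k, 0 ≤ d k) (hrec : ∀ k, d (k + m) ≤ α * (d k + d (k + 1)))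
    (hm : 3 ≤ m) (hα0 : 0 ≤ α) (hα1 : α ≤ 1) {l : ℕ} (hl : l < m) :
    d (m + l) ≤ α * ∑ i ∈ range m, d i := by
  have sum_le {s : Finset ℕ} (hs : s ⊆ range m) : ∑ i ∈ s, d i ≤ ∑ i ∈ range m, d i :=
    sum_le_sum_of_subset_of_nonneg hs fun i _ _ => hd i
  have hpair : d l + d (l + 1) ≤ ∑ i ∈ range m, d i := by
    rcases Nat.lt_or_ge (l + 1) m with hl1 | hl1
    · have := sum_le (s := {l, l + 1}) (by intro i; simp; omega)
      rwa [sum_pair (by omega)] at this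
    · obtain rfl : l = m - 1 := by omega
      have hdm : d m ≤ d 0 + d 1 := by
        have := hrec 0
        rw [zero_add] at this
        nlinarith [hd 0, hd 1]
      have := sum_le (s := {0, 1, m - 1}) (by intro i; simp; omega)
      rw [sum_insert (by simp; omega), sum_pair (by omega)] at this
      rw [Nat.sub_add_cancel (by omega)]
      linarith
  calc d (m + l) = d (l + m) := by rw [add_comm]
    _ ≤ α * (d l + d (l + 1)) := hrec l
    _ ≤ α * ∑ i ∈ range m, d i := by gcongr

theorem next_block_le (hd : ∀ k, 0 ≤ d k) (hrec : ∀ k, d (k + m) ≤ α * (d k + d (k + 1)))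
    (hm : 2 ≤ m) (hα0 : 0 ≤ α) (hα : 2 * α ≤ 1) {n : ℕ} {c : ℝ}
    (hc : ∀ l < m, d (n * m + l) ≤ c) {l : ℕ} (hl : l < m) :
    d ((n + 1) * m + l) ≤ 2 * α * c := by
  have step {l : ℕ} (h₀ : d (n * m + l) ≤ c) (h₁ : d (n * m + l + 1) ≤ c) :
      d ((n + 1) * m + l) ≤ 2 * α * c :=
    calc d ((n + 1) * m + l) = d (n * m + l + m) := by ring_nf
      _ ≤ α * (d (n * m + l) + d (n * m + l + 1)) := hrec _
      _ ≤ α * (c + c) := by gcongr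
      _ = 2 * α * c := by ring
  have hc0 : 0 ≤ c := (hd _).trans (hc 0 (by omega))
  have hhead : d ((n + 1) * m) ≤ 2 * α * c := by
    simpa using step (hc 0 (by omega)) (hc 1 (by omega))
  refine step (hc l hl) ?_
  rcases Nat.lt_or_ge (l + 1) m with hl1 | hl1
  · exact hc (l + 1) hl1
  · have : n * m + l + 1 = (n + 1) * m := by rw [add_mul, one_mul]; omega
    rw [this]
    nlinarith

theorem block_le (hd : ∀ k, 0 ≤ d k) (hrec : ∀ k, d (k + m) ≤ α * (d k + d (k + 1)))
    (hm : 3 ≤ m) (hα0 : 0 ≤ α) (hα : α < 1 / 2) {n : ℕ} (hn : 1 ≤ n) :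
    ∀ l < m, d (n * m + l) ≤ 2 ^ (n - 1) * α ^ n * ∑ i ∈ range m, d i := by
  induction n, hn using Nat.le_induction with
  | base =>
    intro l hl
    simpa using first_block_le hd hrec hm hα0 (by linarith) hl
  | succ n hn ih =>
    intro l hl
    have hpow : (2 : ℝ) ^ (n + 1 - 1) * α ^ (n + 1) = 2 * α * (2 ^ (n - 1) * α ^ n) := by
      obtain ⟨k, rfl⟩ := Nat.exists_eq_add_of_le' hn
      simp only [Nat.add_sub_cancel]
      ring
    rw [hpow, mul_assoc (2 * α)]
    exact next_block_le hd hrec (by omega) hα0 (by linarith) ih hl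

end ChatterjeaSeq

theorem dist_iterate_add_le_of_chatterjea {X : Type*} [MetricSpace X] {ψ : X → X} {m : ℕ}
    {α : ℝ} (hα0 : 0 ≤ α)
    (hcontr : ∀ x y : X, dist (ψ^[m] x) (ψ^[m] y) ≤ α * (dist x (ψ y) + dist y (ψ x)))
    (x : X) (k : ℕ) :
    dist (ψ^[k + m] x) (ψ^[k + m + 1] x) ≤
      α * (dist (ψ^[k] x) (ψ^[k + 1] x) + dist (ψ^[k + 1] x) (ψ^[k + 1 + 1] x)) := by
  have hcontr' := hcontr (ψ^[k] x) (ψ^[k + 1] x)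
  simp only [← Function.iterate_succ_apply' ψ, ← Function.iterate_add_apply, dist_self,
    add_zero] at hcontr'
  calc dist (ψ^[k + m] x) (ψ^[k + m + 1] x)
      = dist (ψ^[m + k] x) (ψ^[m + (k + 1)] x) := by rw [add_comm m, add_comm m, add_right_comm k 1 m]
    _ ≤ α * dist (ψ^[k] x) (ψ^[k + 1 + 1] x) := hcontr'
    _ ≤ α * (dist (ψ^[k] x) (ψ^[k + 1] x) + dist (ψ^[k + 1] x) (ψ^[k + 1 + 1] x)) := by
      gcongr
      exact dist_triangle _ _ _

/-- Inequality (3.2): for an `m`-Chatterjea contraction (`m ≥ 3`) with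
`a(x) = Σ_{i=0}^{m-1} ρ(ψ^i x, ψ^{i+1} x)`, one has
`ρ(ψ^{nm+l} x, ψ^{nm+l+1} x) ≤ 2^{n-1} α^n a(x)` for all `n ≥ 1` and `l ∈ {0,…,m-1}`. -/
theorem stmt_12 {X : Type*} [MetricSpace X]
    (m : ℕ) (hm : 3 ≤ m)
    (ψ : X → X) (α : ℝ) (hα0 : 0 ≤ α) (hα : α < 1 / 2)
    (hcontr : ∀ x y : X, dist (ψ^[m] x) (ψ^[m] y) ≤ α * (dist x (ψ y) + dist y (ψ x)))
    (x : X) (n : ℕ) (hn : 1 ≤ n) (l : ℕ) (hl : l ≤ m - 1) :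
    dist (ψ^[n * m + l] x) (ψ^[n * m + l + 1] x) ≤
      2 ^ (n - 1) * α ^ n * ∑ i ∈ Finset.range m, dist (ψ^[i] x) (ψ^[i + 1] x) := by
  exact ChatterjeaSeq.block_le (d := fun k => dist (ψ^[k] x) (ψ^[k + 1] x))
    (fun _ => dist_nonneg) (dist_iterate_add_le_of_chatterjea hα0 hcontr x) hm hα0 hα hn l
    (by omega)
end

section
/- Let X = [0,1] with the Euclidean metric and define ψ : X → X by ψ0 = 1/8 and ψx = x/8 for x ∈ (0,1]. Then: (i) ψ has no fixed point in [0,1]; (ii) for every x ∈ [0,1] the iterative sequence (ψⁿx) converges to 0; and (iii) for every k ∈ ℕ the iterate ψ^k is discontinuous at 0, so ψ is not k-continuous for any k. -/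
open Filter Topology

/-!
Away from `0` the map is multiplication by `1/8`, so `ψⁿ x = x / 8ⁿ` for `x ≠ 0`, and the orbit
of `0` enters `(0,1]` after one step; hence every orbit tends to `0` while `0` itself is moved.
The same formula shows that `ψ^k` tends to `0` along `(0,1]`, whereas `ψ^k 0 = 8^{1-k} ≠ 0`.
-/

namespace LinearOffZero

variable {ψ : ℝ → ℝ} {c : ℝ}

theorem apply_ne_self (hψ : ∀ x ≠ 0, ψ x = c * x) (hc : c ≠ 1) (h0 : ψ 0 ≠ 0) (x : ℝ) :
    ψ x ≠ x := by
  rcases eq_or_ne x 0 with rfl | hx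
  · exact h0
  · rw [hψ x hx]
    exact fun h => hc (mul_right_cancel₀ hx (h.trans (one_mul x).symm))

theorem iterate_apply_of_ne_zero (hψ : ∀ x ≠ 0, ψ x = c * x) (hc : c ≠ 0) (n : ℕ) {x : ℝ}
    (hx : x ≠ 0) : ψ^[n] x = c ^ n * x := by
  induction n with
  | zero => simp
  | succ n ih =>
    rw [Function.iterate_succ_apply', ih, hψ _ (by positivity), pow_succ']
    ring

theorem iterate_succ_apply_zero (hψ : ∀ x ≠ 0, ψ x = c * x) (hc : c ≠ 0) (n : ℕ) :
    ψ^[n + 1] 0 = c ^ n * ψ 0 := by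
  rw [Function.iterate_succ_apply]
  rcases eq_or_ne (ψ 0) 0 with h0 | h0
  · rw [h0, Function.iterate_fixed h0, mul_zero]
  · exact iterate_apply_of_ne_zero hψ hc n h0

theorem tendsto_iterate_nhds_zero (hψ : ∀ x ≠ 0, ψ x = c * x) (hc : c ≠ 0) (hc1 : |c| < 1)
    (x : ℝ) : Tendsto (fun n => ψ^[n] x) atTop (𝓝 0) := by
  have hgeom (a : ℝ) : Tendsto (fun n : ℕ => c ^ n * a) atTop (𝓝 0) := by
    simpa using (tendsto_pow_atTop_nhds_zero_of_abs_lt_one hc1).mul_const a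
  rcases eq_or_ne x 0 with rfl | hx
  · rw [← tendsto_add_atTop_iff_nat 1]
    simpa only [iterate_succ_apply_zero hψ hc] using hgeom (ψ 0)
  · simpa only [iterate_apply_of_ne_zero hψ hc _ hx] using hgeom x

theorem not_continuousWithinAt_iterate_zero (hψ : ∀ x ≠ 0, ψ x = c * x) (hc : c ≠ 0)
    (h0 : ψ 0 ≠ 0) {s : Set ℝ} [(𝓝[s \ {0}] (0 : ℝ)).NeBot] {k : ℕ} (hk : 1 ≤ k) :
    ¬ ContinuousWithinAt (ψ^[k]) s 0 := by
  intro hcont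
  have h_value : Tendsto (ψ^[k]) (𝓝[s \ {0}] 0) (𝓝 (ψ^[k] 0)) :=
    (hcont.mono Set.sdiff_subset).tendsto
  have h_linear : Tendsto (ψ^[k]) (𝓝[s \ {0}] 0) (𝓝 0) := by
    have : Tendsto (fun x : ℝ => c ^ k * x) (𝓝[s \ {0}] 0) (𝓝 0) := by
      simpa using ((continuous_const_mul (c ^ k)).tendsto 0).mono_left nhdsWithin_le_nhds
    refine this.congr' (eventually_nhdsWithin_of_forall fun x hx => ?_)
    exact (iterate_apply_of_ne_zero hψ hc k hx.2).symm
  obtain ⟨m, rfl⟩ := Nat.exists_eq_add_of_le' hk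
  rw [iterate_succ_apply_zero hψ hc] at h_value
  exact mul_ne_zero (pow_ne_zero m hc) h0 (tendsto_nhds_unique h_value h_linear)

end LinearOffZero

/-- **Example 3.6 (part 2) / Example 3.8.** The mapping `ψ` on `[0,1]` with `ψ0 = 1/8`
and `ψx = x/8` for `x ∈ (0,1]` has no fixed point, all its iterative sequences converge
to `0`, and every iterate `ψ^k` (`k ≥ 1`) is discontinuous at `0`, so `ψ` is not
`k`-continuous for any `k`. -/
theorem stmt_16 (ψ : ℝ → ℝ)
    (hψ : ∀ x : ℝ, ψ x = if x = 0 then 1 / 8 else x / 8) :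
    (∀ x ∈ Set.Icc (0 : ℝ) 1, ψ x ≠ x) ∧
      (∀ x ∈ Set.Icc (0 : ℝ) 1,
        Filter.Tendsto (fun n => ψ^[n] x) Filter.atTop (nhds 0)) ∧
      (∀ k : ℕ, 1 ≤ k → ¬ ContinuousWithinAt (ψ^[k]) (Set.Icc (0 : ℝ) 1) 0) := by
  have h_linear : ∀ x ≠ 0, ψ x = 8⁻¹ * x := fun x hx => by
    rw [hψ, if_neg hx, div_eq_inv_mul]
  have h_zero : ψ 0 ≠ 0 := by norm_num [hψ]
  have h_acc : (𝓝[Set.Icc (0 : ℝ) 1 \ {0}] 0).NeBot :=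
    (left_nhdsWithin_Ioc_neBot zero_lt_one).mono <|
      nhdsWithin_mono 0 fun x hx => ⟨Set.Ioc_subset_Icc_self hx, hx.1.ne'⟩
  refine ⟨fun x _ => ?_, fun x _ => ?_, fun k hk => ?_⟩
  · exact LinearOffZero.apply_ne_self h_linear (by norm_num) h_zero x
  · exact LinearOffZero.tendsto_iterate_nhds_zero h_linear (by norm_num)
      (by rw [abs_of_pos] <;> norm_num) x
  · exact LinearOffZero.not_continuousWithinAt_iterate_zero h_linear (by norm_num) h_zero hk
end

section
/- Let (X, ρ) be a complete metric space and let ψ : X → X satisfy ρ(ψ³x, ψ³y) ≤ α(ρ(x, ψy) + ρ(y, ψx)) for all x, y ∈ X, for some α ∈ [0, 1/2). Let x* ∈ X be the common limit of the iterative sequences (ψⁿx), x ∈ X. If ψ has no fixed point in X, then ψ is discontinuous at x*. -/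
theorem stmt_17_general {X : Type*} [MetricSpace X]
    (ψ : X → X)
    (xs : X)
    (hxs : ∀ x : X, Filter.Tendsto (fun n => ψ^[n] x) Filter.atTop (nhds xs))
    (hnofix : ∀ y : X, ψ y ≠ y) :
    ¬ ContinuousAt ψ xs :=
  fun hcont => hnofix xs (isFixedPt_of_tendsto_iterate (hxs xs) hcont)

/-- **Corollary 3.7.** If a 3-Chatterjea contraction `ψ` on a complete metric space has
no fixed point, then `ψ` is discontinuous at the unique common limit `x*` of all
iterative sequences `(ψⁿ x)`. -/
theorem stmt_17 {X : Type*} [MetricSpace X] [CompleteSpace X]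
    (ψ : X → X) (α : ℝ) (hα0 : 0 ≤ α) (hα : α < 1 / 2)
    (hcontr : ∀ x y : X,
      dist (ψ^[3] x) (ψ^[3] y) ≤ α * (dist x (ψ y) + dist y (ψ x)))
    (xs : X)
    (hxs : ∀ x : X, Filter.Tendsto (fun n => ψ^[n] x) Filter.atTop (nhds xs))
    (hnofix : ∀ y : X, ψ y ≠ y) :
    ¬ ContinuousAt ψ xs :=
  stmt_17_general ψ xs hxs hnofix
end

section
/- Let X = [0,1] with the Euclidean metric and define ψ : X → X by ψ0 = 0, ψ(1/4) = 0, ψ(1/2) = 1/4, and ψx = 1/2 for all other x ∈ [0,1]. Then: (i) ψ is discontinuous at x = 1/2; (ii) ψ³ is the constant map 0, hence ψ is 3-continuous; (iii) ψ satisfies |ψ³x − ψ³y| ≤ (1/3)(|x − ψy| + |y − ψx|) for all x, y ∈ [0,1], i.e. ψ is a 3-Chatterjea contraction with α = 1/3; and (iv) 0 is the unique fixed point of ψ. -/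
/-! `ψ` sends `[0,1]` into `{0, 1/4, 1/2}` and moves these points along `1/2 ↦ 1/4 ↦ 0 ↦ 0`,
so `ψ³ ≡ 0` and the Chatterjea inequality for `ψ³` has left side `0`. Immediately to the right
of `1/2` the map is constantly `1/2`, while `ψ(1/2) = 1/4`. -/

open Filter Topology Set

theorem not_continuousWithinAt_of_eventuallyEq_const {X Y : Type*} [TopologicalSpace X]
    [TopologicalSpace Y] [T1Space Y] {f : X → Y} {s t : Set X} {a : X} {c : Y}
    [(𝓝[t] a).NeBot] (hst : s ∈ 𝓝[t] a) (hf : f =ᶠ[𝓝[t] a] fun _ => c) (ha : f a ≠ c) :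
    ¬ ContinuousWithinAt f s a := fun hcont =>
  ha (tendsto_const_nhds_iff.1
    ((hcont.tendsto.mono_left (nhdsWithin_le_of_mem hst)).congr' hf)).symm

namespace ChatterjeaExample

noncomputable def psi (x : ℝ) : ℝ :=
  if x = 0 then 0 else if x = 1 / 4 then 0 else if x = 1 / 2 then 1 / 4 else 1 / 2

@[simp] theorem psi_zero : psi 0 = 0 := by norm_num [psi]

@[simp] theorem psi_quarter : psi (1 / 4) = 0 := by norm_num [psi]

@[simp] theorem psi_half : psi (1 / 2) = 1 / 4 := by norm_num [psi]

theorem psi_of_ne {x : ℝ} (h0 : x ≠ 0) (h4 : x ≠ 1 / 4) (h2 : x ≠ 1 / 2) : psi x = 1 / 2 := by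
  rw [psi, if_neg h0, if_neg h4, if_neg h2]

theorem iterate_three_psi : psi^[3] = fun _ => 0 := by
  funext x
  change psi (psi (psi x)) = 0
  by_cases h0 : x = 0
  · rw [h0, psi_zero, psi_zero, psi_zero]
  by_cases h4 : x = 1 / 4
  · rw [h4, psi_quarter, psi_zero, psi_zero]
  by_cases h2 : x = 1 / 2
  · rw [h2, psi_half, psi_quarter, psi_zero]
  rw [psi_of_ne h0 h4 h2, psi_half, psi_quarter]

theorem psi_eq_self_iff {y : ℝ} : psi y = y ↔ y = 0 := by
  refine ⟨fun hy => ?_, fun hy => hy ▸ psi_zero⟩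
  by_contra h0
  by_cases h4 : y = 1 / 4
  · norm_num [h4] at hy
  by_cases h2 : y = 1 / 2
  · norm_num [h2] at hy
  exact h2 ((psi_of_ne h0 h4 h2).symm.trans hy).symm

theorem psi_eqOn_Ioi_half : EqOn psi (fun _ => 1 / 2) (Ioi (1 / 2)) := fun x (hx : 1 / 2 < x) =>
  psi_of_ne (by linarith) (by linarith) hx.ne'

theorem not_continuousWithinAt_psi_half : ¬ ContinuousWithinAt psi (Icc 0 1) (1 / 2) :=
  not_continuousWithinAt_of_eventuallyEq_const (t := Ioi (1 / 2))
    (Icc_mem_nhdsGT_of_mem ⟨by norm_num, by norm_num⟩)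
    (eventually_nhdsWithin_of_forall psi_eqOn_Ioi_half) (by norm_num)

end ChatterjeaExample

/-- **Example 3.9.** The mapping `ψ` on `[0,1]` with `ψ0 = 0`, `ψ(1/4) = 0`,
`ψ(1/2) = 1/4` and `ψx = 1/2` otherwise is discontinuous at `1/2`, its third iterate is
the constant map `0` (hence `ψ` is 3-continuous), it is a 3-Chatterjea contraction with
`α = 1/3`, and `0` is its unique fixed point. -/
theorem stmt_18 (ψ : ℝ → ℝ)
    (hψ : ∀ x : ℝ, ψ x =
      if x = 0 then 0 else if x = 1 / 4 then 0 else if x = 1 / 2 then 1 / 4 else 1 / 2) :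
    (¬ ContinuousWithinAt ψ (Set.Icc (0 : ℝ) 1) (1 / 2)) ∧
      (∀ x ∈ Set.Icc (0 : ℝ) 1, ψ^[3] x = 0) ∧
      ContinuousOn (ψ^[3]) (Set.Icc (0 : ℝ) 1) ∧
      (∀ x ∈ Set.Icc (0 : ℝ) 1, ∀ y ∈ Set.Icc (0 : ℝ) 1,
        |ψ^[3] x - ψ^[3] y| ≤ (1 / 3) * (|x - ψ y| + |y - ψ x|)) ∧
      ψ 0 = 0 ∧ (∀ y ∈ Set.Icc (0 : ℝ) 1, ψ y = y → y = 0) := by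
  obtain rfl : ψ = ChatterjeaExample.psi := funext hψ
  rw [ChatterjeaExample.iterate_three_psi]
  refine ⟨ChatterjeaExample.not_continuousWithinAt_psi_half, fun _ _ => rfl, continuousOn_const,
    fun x _ y _ => ?_, ChatterjeaExample.psi_zero, fun _ _ => ChatterjeaExample.psi_eq_self_iff.1⟩
  simp only [sub_self, abs_zero]
  positivity
end
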